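/- Every probabilistically bounded statement of a bounded convergence theorem for i-measures in the norm topology holds: if μ : 𝓜 → L(E,F) is an i-measure on a set Z and (fₙ) ⊆ M_𝓜(Z,E) are uniformly bounded measurable functions converging pointwise in the norm of E to f : Z → E, then ∫_Z fₙ dμ → ∫_Z f dμ in the norm topology of F. -/

import Mathlib

open Filter Topology ENNReal

/-- A series of bounded operators `∑ Tₙ` is *independently convergent* if
`∑ Tₙ xₙ` converges in norm for every bounded sequence `(xₙ)`. -/
def IndepConv {E F : Type*} [NormedAddCommGroup E] [NormedSpace ℝ E]
    [NormedAddCommGroup F] [NormedSpace ℝ F] (T : ℕ → E →L[ℝ] F) : Prop :=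
  ∀ x : ℕ → E, (∃ C : ℝ, ∀ n, ‖x n‖ ≤ C) →
    ∃ y : F, Tendsto (fun N => ∑ n ∈ Finset.range N, T n (x n)) atTop (𝓝 y)

/-- An *i-measure* is an operator-valued set function which is countably additive in the
strong operator topology, and such that `∑ μ(Aₙ)` is independently convergent for every
sequence of pairwise disjoint measurable sets `(Aₙ)`. -/
def IsIMeasure {Z E F : Type*} [MeasurableSpace Z]
    [NormedAddCommGroup E] [NormedSpace ℝ E] [NormedAddCommGroup F] [NormedSpace ℝ F]
    (μ : Set Z → E →L[ℝ] F) : Prop :=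
  (∀ A : ℕ → Set Z, (∀ n, MeasurableSet (A n)) → Pairwise (Function.onFun Disjoint A) →
    ∀ x : E,
      Tendsto (fun N => ∑ n ∈ Finset.range N, μ (A n) x) atTop (𝓝 (μ (⋃ n, A n) x))) ∧
  (∀ A : ℕ → Set Z, (∀ n, MeasurableSet (A n)) → Pairwise (Function.onFun Disjoint A) →
    IndepConv fun n => μ (A n))

/-- The semivariation `‖μ‖_A` of an operator-valued set function `μ` on a set `A`. -/
noncomputable def semivar {Z E F : Type*} [MeasurableSpace Z]
    [NormedAddCommGroup E] [NormedSpace ℝ E] [NormedAddCommGroup F] [NormedSpace ℝ F]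
    (μ : Set Z → E →L[ℝ] F) (A : Set Z) : ℝ≥0∞ :=
  ⨆ (N : ℕ) (B : ℕ → Set Z) (_ : ∀ n, MeasurableSet (B n)) (_ : ∀ n, B n ⊆ A)
    (_ : Pairwise (Function.onFun Disjoint B)) (x : ℕ → E) (_ : ∀ n, ‖x n‖ ≤ 1),
    ENNReal.ofReal ‖∑ n ∈ Finset.range N, μ (B n) (x n)‖

/-- `HasCVIntegral μ g y`: the countably-valued measurable function `g` has integral `y`
with respect to `μ`, i.e. `y = ∑ₙ μ(Aₙ) eₙ` for a countable measurable partition `(Aₙ)` of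
the space on which `g` takes the constant values `eₙ`. -/
def HasCVIntegral {Z E F : Type*} [MeasurableSpace Z]
    [NormedAddCommGroup E] [NormedSpace ℝ E] [NormedAddCommGroup F] [NormedSpace ℝ F]
    (μ : Set Z → E →L[ℝ] F) (g : Z → E) (y : F) : Prop :=
  ∃ (e : ℕ → E) (A : ℕ → Set Z), (∀ n, MeasurableSet (A n)) ∧
    Pairwise (Function.onFun Disjoint A) ∧ (⋃ n, A n) = Set.univ ∧
    (∀ n, ∀ z ∈ A n, g z = e n) ∧
    Tendsto (fun N => ∑ n ∈ Finset.range N, μ (A n) (e n)) atTop (𝓝 y)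

/-- `HasIntegral μ f y`: the function `f` has integral `y` with respect to `μ`, obtained by
uniform approximation by countably-valued measurable functions. -/
def HasIntegral {Z E F : Type*} [MeasurableSpace Z]
    [NormedAddCommGroup E] [NormedSpace ℝ E] [NormedAddCommGroup F] [NormedSpace ℝ F]
    (μ : Set Z → E →L[ℝ] F) (f : Z → E) (y : F) : Prop :=
  ∃ (g : ℕ → Z → E) (w : ℕ → F),
    (∀ k, HasCVIntegral μ (g k) (w k)) ∧
    (∀ (k : ℕ) (z : Z), ‖g k z - f z‖ ≤ 1 / ((k : ℝ) + 1)) ∧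
    Tendsto w atTop (𝓝 y)

open Function MeasureTheory

/-!
Independent convergence makes every series `∑ μ(Aₙ) xₙ` over pairwise disjoint measurable sets
with bounded `xₙ` unconditionally summable (a gliding hump argument). Hence no sequence of
pairwise disjoint sets can all have semivariation above a fixed `r > 0`, and exhausting against
this shows that `‖μ(B)‖` is bounded, that the semivariation `‖μ‖_Z` is finite, and that
`‖μ‖_{D_N} → 0` along decreasing measurable sets `D_N` with empty intersection.

The integral of a countably valued function is at most its bound on `S` times `‖μ‖_S` plus its
bound off `S` times `‖μ‖_Z`; this passes to uniform limits. Applied to `fₙ - g` and the Egorov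
sets `D_N = {z | ∃ n ≥ N, δ < ‖fₙ z - g z‖}` it gives `‖∫ fₙ - ∫ g‖ ≤ 2C ‖μ‖_{D_N} + δ ‖μ‖_Z`
for `n ≥ N`.
-/

theorem summable_of_forall_cauchySeq_indicator {F : Type*} [NormedAddCommGroup F]
    [CompleteSpace F] {a : ℕ → F}
    (h : ∀ S : Set ℕ, CauchySeq fun N => ∑ n ∈ Finset.range N, S.indicator a n) :
    Summable a := by
  rw [summable_iff_vanishing_norm]
  by_contra! hbad
  obtain ⟨ε, hε, hbad⟩ := hbad
  choose t htN htε using hbad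
  -- the block `t (range N)` lies in `[N, next N)`
  set next : ℕ → ℕ := fun N => max (N + 1) ((t (Finset.range N)).sup id + 1)
  set b : ℕ → ℕ := fun k => next^[k] 0
  have hb_succ : ∀ k, b (k + 1) = next (b k) := fun k => Function.iterate_succ_apply' _ _ _
  have hb : StrictMono b := strictMono_nat_of_lt_succ fun k => by
    rw [hb_succ]; simp only [next]; omega
  have ht_mem : ∀ k, ∀ n ∈ t (Finset.range (b k)), b k ≤ n ∧ n < b (k + 1) := by
    intro k n hn
    refine ⟨not_lt.mp fun h => Finset.disjoint_left.mp (htN _) hn (Finset.mem_range.mpr h), ?_⟩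
    have := Finset.le_sup (f := id) hn
    rw [hb_succ]
    simp only [next, id] at this ⊢
    omega
  set S : Set ℕ := {n | ∃ k, n ∈ t (Finset.range (b k))}
  have hblock : ∀ k, ∑ n ∈ Finset.range (b (k + 1)), S.indicator a n -
      ∑ n ∈ Finset.range (b k), S.indicator a n = ∑ n ∈ t (Finset.range (b k)), a n := by
    intro k
    rw [← Finset.sum_Ico_eq_sub _ (hb (Nat.lt_succ_self k)).le]
    refine (Finset.sum_subset (fun n hn => Finset.mem_Ico.mpr (ht_mem k n hn)) ?_).symm.trans
      (Finset.sum_congr rfl fun n hn => Set.indicator_of_mem (show n ∈ S from ⟨k, hn⟩) a)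
    intro n hn hnt
    refine Set.indicator_of_notMem ?_ a
    rintro ⟨j, hj⟩
    obtain ⟨h1, h2⟩ := ht_mem j n hj
    obtain ⟨h3, h4⟩ := Finset.mem_Ico.mp hn
    rcases lt_trichotomy j k with hjk | rfl | hjk
    · have := hb.monotone (show j + 1 ≤ k by omega); omega
    · exact hnt hj
    · have := hb.monotone (show k + 1 ≤ j by omega); omega
  obtain ⟨N, hN⟩ := Metric.cauchySeq_iff.mp (h S) ε hε
  have := hN _ ((hb.id_le N).trans (hb (Nat.lt_succ_self N)).le) _ (hb.id_le N)
  rw [dist_eq_norm, hblock] at this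
  exact (htε _).not_gt this

theorem exists_one_lt_norm_sum_range_and_Ico {F : Type*} [SeminormedAddCommGroup F]
    {t : ℕ → F} {K : ℝ} (ht : ∀ n, ‖t n‖ ≤ K) {N : ℕ}
    (hN : K + 2 < ‖∑ n ∈ Finset.range N, t n‖) :
    ∃ k ≤ N, 1 < ‖∑ n ∈ Finset.range k, t n‖ ∧ 1 < ‖∑ n ∈ Finset.Ico k N, t n‖ := by
  classical
  have hK : 0 ≤ K := (norm_nonneg _).trans (ht 0)
  have hex : ∃ k, 1 < ‖∑ n ∈ Finset.range k, t n‖ := ⟨N, by linarith⟩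
  set k := Nat.find hex
  have hkN : k ≤ N := Nat.find_min' hex (by linarith)
  have hk : 1 < ‖∑ n ∈ Finset.range k, t n‖ := Nat.find_spec hex
  obtain ⟨j, hj⟩ : ∃ j, k = j + 1 :=
    Nat.exists_eq_add_one.mpr (Nat.pos_of_ne_zero fun h => by simp [h] at hk; linarith)
  have hj_le : ‖∑ n ∈ Finset.range j, t n‖ ≤ 1 := not_lt.mp (Nat.find_min hex (by omega))
  have hk_le : ‖∑ n ∈ Finset.range k, t n‖ ≤ 1 + K := by
    rw [hj, Finset.sum_range_succ]
    exact (norm_add_le _ _).trans (add_le_add hj_le (ht j))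
  refine ⟨k, hkN, hk, ?_⟩
  rw [Finset.sum_Ico_eq_sub _ hkN]
  linarith [norm_sub_norm_le (∑ n ∈ Finset.range N, t n) (∑ n ∈ Finset.range k, t n)]

theorem pairwise_disjoint_on_inter_prod {α ι κ : Type*} {A : ι → Set α} {B : κ → Set α}
    (hA : Pairwise (Disjoint on A)) (hB : Pairwise (Disjoint on B)) :
    Pairwise (Disjoint on fun q : ι × κ => A q.1 ∩ B q.2) := by
  rintro ⟨i, j⟩ ⟨k, l⟩ hne
  rcases eq_or_ne i k with rfl | hik
  · exact (hB fun hjl => hne (Prod.ext rfl hjl)).mono Set.inter_subset_right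
      Set.inter_subset_right
  · exact (hA hik).mono Set.inter_subset_left Set.inter_subset_left

theorem measurableSet_setOf_exists_lt_norm_sub {Z E : Type*} [MeasurableSpace Z]
    [NormedAddCommGroup E] {f : ℕ → Z → E} {g : Z → E}
    (hf : ∀ n, StronglyMeasurable (f n)) (hg : StronglyMeasurable g)
    (δ : ℝ) (N : ℕ) : MeasurableSet {z | ∃ n ≥ N, δ < ‖f n z - g z‖} := by
  have : {z | ∃ n ≥ N, δ < ‖f n z - g z‖} = ⋃ n ≥ N, {z | δ < ‖f n z - g z‖} := by
    ext; simp
  rw [this]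
  exact .iUnion fun n => .iUnion fun _ =>
    measurableSet_lt measurable_const ((hf n).sub hg).norm.measurable

section Semivariation

variable {Z E F : Type*} [MeasurableSpace Z] [NormedAddCommGroup E] [NormedSpace ℝ E]
  [NormedAddCommGroup F] [NormedSpace ℝ F] {μ : Set Z → E →L[ℝ] F}

theorem semivar_le_iff {A : Set Z} {r : ℝ≥0∞} :
    semivar μ A ≤ r ↔ ∀ (N : ℕ) (B : ℕ → Set Z), (∀ n, MeasurableSet (B n)) →
      (∀ n, B n ⊆ A) → Pairwise (Disjoint on B) → ∀ x : ℕ → E, (∀ n, ‖x n‖ ≤ 1) →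
      ENNReal.ofReal ‖∑ n ∈ Finset.range N, μ (B n) (x n)‖ ≤ r := by
  simp only [semivar, iSup_le_iff]

theorem exists_lt_ofReal_norm_of_lt_semivar {A : Set Z} {r : ℝ≥0∞} (h : r < semivar μ A) :
    ∃ (N : ℕ) (B : ℕ → Set Z) (x : ℕ → E), (∀ n, MeasurableSet (B n)) ∧ (∀ n, B n ⊆ A) ∧
      Pairwise (Disjoint on B) ∧ (∀ n, ‖x n‖ ≤ 1) ∧
      r < ENNReal.ofReal ‖∑ n ∈ Finset.range N, μ (B n) (x n)‖ := by
  by_contra! hle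
  exact h.not_ge (semivar_le_iff.mpr fun N B hB hBA hd x hx => hle N B x hB hBA hd hx)

theorem ofReal_norm_sum_le_semivar {A : Set Z} (s : Finset ℕ) {B : ℕ → Set Z}
    (hB : ∀ n ∈ s, MeasurableSet (B n)) (hBA : ∀ n ∈ s, B n ⊆ A)
    (hd : (s : Set ℕ).PairwiseDisjoint B) {x : ℕ → E} (hx : ∀ n ∈ s, ‖x n‖ ≤ 1) :
    ENNReal.ofReal ‖∑ n ∈ s, μ (B n) (x n)‖ ≤ semivar μ A := by
  classical
  obtain ⟨N, hsN⟩ := s.exists_nat_subset_range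
  set B' : ℕ → Set Z := fun n => if n ∈ s then B n else ∅
  set x' : ℕ → E := fun n => if n ∈ s then x n else 0
  have hsum : ∑ n ∈ s, μ (B n) (x n) = ∑ n ∈ Finset.range N, μ (B' n) (x' n) := by
    refine Finset.sum_subset_zero_on_sdiff hsN (fun n hn => ?_) fun n hn => ?_
    · simp [x', (Finset.mem_sdiff.mp hn).2]
    · simp [B', x', hn]
  have hd' : Pairwise (Disjoint on B') := by
    intro i j hij
    simp only [Function.onFun, B']
    split_ifs with hi hj hj
    exacts [hd hi hj hij, Set.disjoint_empty _, Set.empty_disjoint _, Set.empty_disjoint _]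
  rw [hsum]
  refine semivar_le_iff.mp le_rfl N B' (fun n => ?_) (fun n => ?_) hd' x' fun n => ?_
  · by_cases hn : n ∈ s <;> simp [B', hn, hB]
  · by_cases hn : n ∈ s <;> simp [B', hn, hBA]
  · by_cases hn : n ∈ s <;> simp [x', hn, hx]

theorem ofReal_norm_sum_range_le_semivar {A : Set Z} (N : ℕ) {B : ℕ → Set Z}
    (hB : ∀ n, MeasurableSet (B n)) (hBA : ∀ n, B n ⊆ A) (hd : Pairwise (Disjoint on B))
    {x : ℕ → E} (hx : ∀ n, ‖x n‖ ≤ 1) :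
    ENNReal.ofReal ‖∑ n ∈ Finset.range N, μ (B n) (x n)‖ ≤ semivar μ A :=
  ofReal_norm_sum_le_semivar _ (fun n _ => hB n) (fun n _ => hBA n) (hd.set_pairwise _)
    fun n _ => hx n

theorem ofReal_norm_le_semivar {A : Set Z} (hA : MeasurableSet A) :
    ENNReal.ofReal ‖μ A‖ ≤ semivar μ A := by
  by_cases htop : semivar μ A = ⊤
  · exact htop ▸ le_top
  rw [ENNReal.ofReal_le_iff_le_toReal htop]
  refine ContinuousLinearMap.opNorm_le_of_unit_norm ENNReal.toReal_nonneg fun x hx => ?_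
  rw [← ENNReal.ofReal_le_iff_le_toReal htop]
  simpa using ofReal_norm_sum_le_semivar {0} (μ := μ) (B := fun _ => A) (x := fun _ => x)
    (by simpa using hA) (by simp) (by simp) (by simp [hx])

theorem semivar_mono {A A' : Set Z} (h : A ⊆ A') : semivar μ A ≤ semivar μ A' :=
  semivar_le_iff.mpr fun N _ hB hBA hd _ hx =>
    ofReal_norm_sum_range_le_semivar N hB (fun n => (hBA n).trans h) hd hx

end Semivariation

namespace IsIMeasure

variable {Z E F : Type*} [MeasurableSpace Z] [NormedAddCommGroup E] [NormedSpace ℝ E]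
  [NormedAddCommGroup F] [NormedSpace ℝ F] [CompleteSpace F] {μ : Set Z → E →L[ℝ] F}

theorem summable_nat (hμ : IsIMeasure μ) {A : ℕ → Set Z} (hA : ∀ n, MeasurableSet (A n))
    (hd : Pairwise (Disjoint on A)) {x : ℕ → E} {C : ℝ} (hx : ∀ n, ‖x n‖ ≤ C) :
    Summable fun n => μ (A n) (x n) := by
  refine summable_of_forall_cauchySeq_indicator fun S => ?_
  have hxS : ∀ n, ‖S.indicator x n‖ ≤ max C 0 := fun n => by
    by_cases hn : n ∈ S <;> simp [hn, (hx n).trans (le_max_left C 0)]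
  obtain ⟨y, hy⟩ := hμ.2 A hA hd (S.indicator x) ⟨_, hxS⟩
  refine (hy.congr fun N => Finset.sum_congr rfl fun n _ => ?_).cauchySeq
  by_cases hn : n ∈ S <;> simp [hn]

theorem hasSum_apply (hμ : IsIMeasure μ) {A : ℕ → Set Z} (hA : ∀ n, MeasurableSet (A n))
    (hd : Pairwise (Disjoint on A)) (x : E) :
    HasSum (fun n => μ (A n) x) (μ (⋃ n, A n) x) :=
  (hμ.summable_nat hA hd (x := fun _ => x) fun _ => le_rfl).hasSum_iff_tendsto_nat.mpr
    (hμ.1 A hA hd x)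

theorem empty (hμ : IsIMeasure μ) : μ ∅ = 0 := by
  ext x
  have h := hμ.hasSum_apply (A := fun _ => ∅) (fun _ => .empty)
    (fun _ _ _ => Set.disjoint_empty _) x
  rw [Set.iUnion_empty] at h
  exact tendsto_nhds_unique tendsto_const_nhds h.summable.tendsto_atTop_zero

theorem apply_congr_of_nonempty (hμ : IsIMeasure μ) {A : Set Z} {x x' : E}
    (h : A.Nonempty → x = x') : μ A x = μ A x' := by
  rcases A.eq_empty_or_nonempty with rfl | hA
  · simp [hμ.empty]
  · rw [h hA]

theorem exists_norm_le_apply_eq (hμ : IsIMeasure μ) {ι : Type*} {A : ι → Set Z}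
    {x : ι → E} {C : ℝ} (hC : 0 ≤ C) (hx : ∀ i, (A i).Nonempty → ‖x i‖ ≤ C) :
    ∃ x' : ι → E, (∀ i, ‖x' i‖ ≤ C) ∧ ∀ i, μ (A i) (x' i) = μ (A i) (x i) := by
  classical
  refine ⟨fun i => if (A i).Nonempty then x i else 0, fun i => ?_, fun i =>
    hμ.apply_congr_of_nonempty fun hi => if_pos hi⟩
  dsimp only
  split_ifs with hi
  exacts [hx i hi, by simpa using hC]

theorem summable {ι : Type*} [Countable ι] (hμ : IsIMeasure μ) {A : ι → Set Z}
    (hA : ∀ i, MeasurableSet (A i)) (hd : Pairwise (Disjoint on A)) {x : ι → E} {C : ℝ}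
    (hx : ∀ i, (A i).Nonempty → ‖x i‖ ≤ C) :
    Summable fun i => μ (A i) (x i) := by
  obtain ⟨x', hx', hxx'⟩ := hμ.exists_norm_le_apply_eq (le_max_right C 0)
    fun i hi => (hx i hi).trans (le_max_left C 0)
  simp only [← hxx']
  rcases finite_or_infinite ι with hι | hι
  · exact .of_finite
  obtain ⟨e⟩ := nonempty_equiv_of_countable (α := ℕ) (β := ι)
  exact (e.summable_iff).mp <| hμ.summable_nat (fun n => hA (e n))
    (fun m n hmn => hd (e.injective.ne hmn)) fun n => hx' (e n)

theorem inter_add_diff (hμ : IsIMeasure μ) {B S : Set Z} (hB : MeasurableSet B)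
    (hS : MeasurableSet S) : μ (B ∩ S) + μ (B \ S) = μ B := by
  ext x
  set A : ℕ → Set Z := fun n => if n = 0 then B ∩ S else if n = 1 then B \ S else ∅
  have hA : ∀ n, MeasurableSet (A n) := fun n => by
    simp only [A]; split_ifs
    exacts [hB.inter hS, hB.diff hS, .empty]
  have hd : Pairwise (Disjoint on A) := by
    rintro (_ | _ | i) (_ | _ | j) hij <;>
      simp_all [A, Function.onFun, Set.disjoint_sdiff_inter, Set.disjoint_sdiff_inter.symm]
  have hU : (⋃ n, A n) = B := by
    refine subset_antisymm (Set.iUnion_subset fun n => ?_) fun z hz => ?_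
    · simp only [A]; split_ifs
      exacts [Set.inter_subset_left, Set.sdiff_subset, Set.empty_subset _]
    · by_cases hzS : z ∈ S
      exacts [Set.mem_iUnion.mpr ⟨0, by simp [A, hz, hzS]⟩,
        Set.mem_iUnion.mpr ⟨1, by simp [A, hz, hzS]⟩]
  have := (hμ.hasSum_apply hA hd x).unique
    (hasSum_sum_of_ne_finset_zero (L := .unconditional ℕ) (s := Finset.range 2) ?_)
  · simpa [hU, Finset.sum_range_succ, A] using this.symm
  · intro n hn
    simp at hn
    simp [A, show n ≠ 0 by omega, show n ≠ 1 by omega, hμ.empty]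

theorem apply_biUnion_finset (hμ : IsIMeasure μ) {A : ℕ → Set Z}
    (hA : ∀ n, MeasurableSet (A n)) (hd : Pairwise (Disjoint on A)) (s : Finset ℕ) (x : E) :
    μ (⋃ n ∈ s, A n) x = ∑ n ∈ s, μ (A n) x := by
  classical
  set A' : ℕ → Set Z := fun n => if n ∈ s then A n else ∅
  have hA' : ∀ n, MeasurableSet (A' n) := fun n => by
    simp only [A']; split_ifs
    exacts [hA n, .empty]
  have hd' : Pairwise (Disjoint on A') := fun i j hij => by
    simp only [Function.onFun, A']; split_ifs
    exacts [hd hij, Set.disjoint_empty _, Set.empty_disjoint _, Set.empty_disjoint _]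
  have hU : (⋃ n, A' n) = ⋃ n ∈ s, A n := by
    ext z; simp [A']
  have hsum := hasSum_sum_of_ne_finset_zero (L := .unconditional ℕ) (s := s)
    (f := fun n => μ (A' n) x) fun n hn => by simp [A', hn, hμ.empty]
  rw [show ∑ n ∈ s, μ (A' n) x = ∑ n ∈ s, μ (A n) x from
    Finset.sum_congr rfl fun n hn => by simp [A', hn]] at hsum
  rw [← hU]
  exact (hμ.hasSum_apply hA' hd' x).unique hsum

theorem tendsto_apply_of_monotone (hμ : IsIMeasure μ) {C : ℕ → Set Z}
    (hC : ∀ n, MeasurableSet (C n)) (hmono : Monotone C) (x : E) :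
    Tendsto (fun n => μ (C n) x) atTop (𝓝 (μ (⋃ n, C n) x)) := by
  have h := hμ.hasSum_apply (MeasurableSet.disjointed hC) (disjoint_disjointed C) x
  rw [iUnion_disjointed] at h
  refine ((tendsto_add_atTop_iff_nat 1).mpr h.tendsto_sum_nat).congr fun n => ?_
  rw [← hμ.apply_biUnion_finset (.disjointed hC) (disjoint_disjointed C),
    biUnion_range_succ_disjointed, hmono.partialSups_eq]

theorem sum_apply_inter_add_sum_apply_diff (hμ : IsIMeasure μ) {B : ℕ → Set Z}
    (hB : ∀ n, MeasurableSet (B n)) {S : Set Z} (hS : MeasurableSet S) (x : ℕ → E)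
    (s : Finset ℕ) :
    ∑ n ∈ s, μ (B n ∩ S) (x n) + ∑ n ∈ s, μ (B n \ S) (x n) = ∑ n ∈ s, μ (B n) (x n) := by
  rw [← Finset.sum_add_distrib]
  refine Finset.sum_congr rfl fun n _ => ?_
  rw [← hμ.inter_add_diff (hB n) hS]
  rfl

theorem semivar_le_inter_add_diff (hμ : IsIMeasure μ) (A : Set Z) {S : Set Z}
    (hS : MeasurableSet S) : semivar μ A ≤ semivar μ (A ∩ S) + semivar μ (A \ S) := by
  refine semivar_le_iff.mpr fun N B hB hBA hd x hx => ?_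
  rw [← hμ.sum_apply_inter_add_sum_apply_diff hB hS]
  refine (ENNReal.ofReal_le_ofReal (norm_add_le _ _)).trans <|
    ENNReal.ofReal_add_le.trans <| add_le_add ?_ ?_
  · exact ofReal_norm_sum_range_le_semivar N (fun n => (hB n).inter hS)
      (fun n => Set.inter_subset_inter_left _ (hBA n))
      (fun i j hij => (hd hij).mono Set.inter_subset_left Set.inter_subset_left) hx
  · exact ofReal_norm_sum_range_le_semivar N (fun n => (hB n).diff hS)
      (fun n => Set.sdiff_subset_sdiff_left (hBA n))
      (fun i j hij => (hd hij).mono Set.sdiff_subset Set.sdiff_subset) hx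

theorem semivar_iUnion_of_monotone (hμ : IsIMeasure μ) {C : ℕ → Set Z}
    (hC : ∀ n, MeasurableSet (C n)) (hmono : Monotone C) :
    semivar μ (⋃ n, C n) = ⨆ n, semivar μ (C n) := by
  refine le_antisymm (semivar_le_iff.mpr fun N B hB hBU hd x hx => ?_)
    (iSup_le fun n => semivar_mono (Set.subset_iUnion C n))
  have hlim : Tendsto (fun n => ∑ i ∈ Finset.range N, μ (B i ∩ C n) (x i)) atTop
      (𝓝 (∑ i ∈ Finset.range N, μ (B i) (x i))) := by
    refine tendsto_finsetSum _ fun i _ => ?_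
    have := hμ.tendsto_apply_of_monotone (fun n => (hB i).inter (hC n))
      (fun m n hmn => Set.inter_subset_inter_right _ (hmono hmn)) (x i)
    rwa [← Set.inter_iUnion, Set.inter_eq_left.mpr (hBU i)] at this
  refine le_of_tendsto' ((ENNReal.continuous_ofReal.tendsto _).comp hlim.norm) fun n =>
    le_iSup_of_le n ?_
  exact ofReal_norm_sum_range_le_semivar N (fun i => (hB i).inter (hC n))
    (fun i => Set.inter_subset_right)
    (fun i j hij => (hd hij).mono Set.inter_subset_left Set.inter_subset_left) hx

theorem exists_semivar_le_of_pairwise_disjoint (hμ : IsIMeasure μ) {C : ℕ → Set Z}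
    (hd : Pairwise (Disjoint on C)) {r : ℝ≥0∞} (hr : 0 < r) :
    ∃ k, semivar μ (C k) ≤ r := by
  by_contra! hbig
  choose N B x hB hBC hBd hx hlt using fun k => exists_lt_ofReal_norm_of_lt_semivar (hbig k)
  set v : ℕ × ℕ → E := fun p => if p.2 < N p.1 then x p.1 p.2 else 0
  have hsum : Summable fun p : ℕ × ℕ => μ (B p.1 p.2) (v p) := by
    refine hμ.summable (A := fun p : ℕ × ℕ => B p.1 p.2) (fun p => hB _ _) ?_ (C := 1)
      fun p _ => ?_
    · rintro ⟨k, i⟩ ⟨l, j⟩ hne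
      rcases eq_or_ne k l with rfl | hkl
      · exact hBd k fun hij => hne (Prod.ext rfl hij)
      · exact (hd hkl).mono (hBC k i) (hBC l j)
    · simp only [v]; split_ifs
      exacts [hx _ _, by simp]
  have hblock : ∀ k, HasSum (fun i => μ (B k i) (v (k, i)))
      (∑ i ∈ Finset.range (N k), μ (B k i) (x k i)) := by
    intro k
    have h := hasSum_sum_of_ne_finset_zero (L := .unconditional ℕ) (s := Finset.range (N k))
      (f := fun i => μ (B k i) (v (k, i))) fun i hi => by simp [v, Finset.mem_range.not.mp hi]
    rwa [show ∑ i ∈ Finset.range (N k), μ (B k i) (v (k, i)) =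
      ∑ i ∈ Finset.range (N k), μ (B k i) (x k i) from
      Finset.sum_congr rfl fun i hi => by simp [v, Finset.mem_range.mp hi]] at h
  have h0 := (hsum.hasSum.prod_fiberwise hblock).summable.tendsto_atTop_zero
  have h0' := ENNReal.tendsto_ofReal h0.norm
  rw [norm_zero, ENNReal.ofReal_zero] at h0'
  obtain ⟨k, hk⟩ := (h0'.eventually (gt_mem_nhds hr)).exists
  exact (hlt k).not_gt hk

theorem not_of_forall_exists_lt_semivar (hμ : IsIMeasure μ) {r : ℝ≥0∞} (hr : 0 < r)
    {p : Set Z → Prop}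
    (hstep : ∀ A, p A → ∃ C ⊆ A, r < semivar μ C ∧ p (A \ C))
    (A : Set Z) : ¬ p A := by
  intro hA
  choose! C hCA hCr hpC using hstep
  set A' : ℕ → Set Z := fun k => (fun B => B \ C B)^[k] A
  have hA'_succ : ∀ k, A' (k + 1) = A' k \ C (A' k) := fun k =>
    Function.iterate_succ_apply' _ _ _
  have hp : ∀ k, p (A' k) := fun k => by
    induction k with
    | zero => exact hA
    | succ k ih => rw [hA'_succ]; exact hpC _ ih
  have hanti : Antitone A' := antitone_nat_of_succ_le fun k => by
    rw [hA'_succ]; exact Set.sdiff_subset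
  have hd : Pairwise (Disjoint on fun k => C (A' k)) := by
    refine (pairwise_disjoint_on _).mpr fun j k hjk => ?_
    have : C (A' k) ⊆ A' j \ C (A' j) := (hCA _ (hp k)).trans (hA'_succ j ▸ hanti hjk)
    exact Set.disjoint_sdiff_right.mono_right this
  obtain ⟨k, hk⟩ := hμ.exists_semivar_le_of_pairwise_disjoint hd hr
  exact (hCr _ (hp k)).not_ge hk

theorem exists_norm_le (hμ : IsIMeasure μ) : ∃ K, ∀ B, MeasurableSet B → ‖μ B‖ ≤ K := by
  by_contra! hunb
  have hone : ∀ C, MeasurableSet C → 1 < ‖μ C‖ → 1 < semivar μ C := fun C hC h1 =>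
    (ENNReal.one_lt_ofReal.mpr h1).trans_le (ofReal_norm_le_semivar hC)
  refine hμ.not_of_forall_exists_lt_semivar one_pos
    (p := fun A => MeasurableSet A ∧ ∀ K, ∃ B ⊆ A, MeasurableSet B ∧ K < ‖μ B‖) ?_ Set.univ
    ⟨.univ, fun K => (hunb K).imp fun B hB => ⟨Set.subset_univ B, hB⟩⟩
  rintro A ⟨hA, hAunb⟩
  obtain ⟨B, hBA, hB, hBK⟩ := hAunb (‖μ A‖ + 2)
  -- Both `B` and `A \ B` have `‖μ ·‖ > 1`; remove one so that `‖μ ·‖` stays unbounded on the rest.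
  by_cases hBunb : ∀ K, ∃ B' ⊆ B, MeasurableSet B' ∧ K < ‖μ B'‖
  · have hdiff : μ (A \ B) = μ A - μ B := by
      rw [← hμ.inter_add_diff hA hB, Set.inter_eq_right.mpr hBA, add_sub_cancel_left]
    refine ⟨A \ B, Set.sdiff_subset, hone _ (hA.diff hB) ?_, ?_⟩
    · rw [hdiff, norm_sub_rev]
      linarith [norm_sub_norm_le (μ B) (μ A)]
    · rw [Set.sdiff_sdiff_cancel_left hBA]
      exact ⟨hB, hBunb⟩
  simp only [not_forall, not_exists, not_and, not_lt] at hBunb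
  obtain ⟨K₁, hK₁⟩ := hBunb
  refine ⟨B, hBA, hone _ hB (by linarith [norm_nonneg (μ A)]), hA.diff hB, fun K => ?_⟩
  obtain ⟨B', hB'A, hB', hK⟩ := hAunb (K₁ + K)
  refine ⟨B' \ B, Set.sdiff_subset_sdiff_left hB'A, hB'.diff hB, ?_⟩
  have h₁ := hK₁ (B' ∩ B) Set.inter_subset_right (hB'.inter hB)
  have h₂ := norm_add_le (μ (B' ∩ B)) (μ (B' \ B))
  rw [hμ.inter_add_diff hB' hB] at h₂
  linarith

theorem semivar_ne_top (hμ : IsIMeasure μ) (A : Set Z) : semivar μ A ≠ ⊤ := by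
  obtain ⟨K, hK⟩ := hμ.exists_norm_le
  refine hμ.not_of_forall_exists_lt_semivar one_pos (p := fun A => semivar μ A = ⊤)
    (fun A hA => ?_) A
  obtain ⟨N, B, x, hB, hBA, hd, hx, hlt⟩ :=
    exists_lt_ofReal_norm_of_lt_semivar (hA ▸ ENNReal.ofReal_lt_top : .ofReal (K + 2) < semivar μ A)
  have ht : ∀ n, ‖μ (B n) (x n)‖ ≤ K := fun n =>
    ((μ (B n)).le_of_opNorm_le_of_le (hK _ (hB n)) (hx n)).trans_eq (mul_one K)
  -- As each term has norm `≤ K`, the family splits into an initial segment and the rest, both of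
  -- norm `> 1`; removing the union of one of them leaves infinite semivariation.
  obtain ⟨k, -, h₁, h₂⟩ :=
    exists_one_lt_norm_sum_range_and_Ico ht (ENNReal.ofReal_lt_ofReal_iff'.mp hlt).1
  have hsv : ∀ s : Finset ℕ, 1 < ‖∑ n ∈ s, μ (B n) (x n)‖ → 1 < semivar μ (⋃ n ∈ s, B n) :=
    fun s hs => (ENNReal.one_lt_ofReal.mpr hs).trans_le <| ofReal_norm_sum_le_semivar s
      (fun n _ => hB n) (fun n hn => Set.subset_biUnion_of_mem (u := B) hn) (hd.set_pairwise _)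
      fun n _ => hx n
  set U₁ := ⋃ n ∈ Finset.range k, B n
  have hU₁A : U₁ ⊆ A := Set.iUnion₂_subset fun n _ => hBA n
  by_cases hrest : semivar μ (A \ U₁) = ⊤
  · exact ⟨U₁, hU₁A, hsv _ h₁, hrest⟩
  have hU₁ : semivar μ U₁ = ⊤ := by
    have := hμ.semivar_le_inter_add_diff A (S := U₁)
      (Finset.measurableSet_biUnion _ fun n _ => hB n)
    rw [hA, Set.inter_eq_right.mpr hU₁A, top_le_iff, ENNReal.add_eq_top] at this
    exact this.resolve_right hrest
  refine ⟨⋃ n ∈ Finset.Ico k N, B n, Set.iUnion₂_subset fun n _ => hBA n, hsv _ h₂,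
    top_le_iff.mp (hU₁ ▸ semivar_mono fun z hz => ⟨hU₁A hz, ?_⟩)⟩
  simp only [U₁, Set.mem_iUnion, Finset.mem_range, Finset.mem_Ico] at hz ⊢
  rintro ⟨j, hj, hzj⟩
  obtain ⟨i, hi, hzi⟩ := hz
  exact Set.disjoint_left.mp (hd (show i ≠ j by omega)) hzi hzj

theorem norm_sum_le_mul_semivar (hμ : IsIMeasure μ) {S : Set Z} {B : ℕ → Set Z}
    (hB : ∀ n, MeasurableSet (B n)) (hBS : ∀ n, B n ⊆ S) (hd : Pairwise (Disjoint on B))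
    {x : ℕ → E} {c : ℝ} (hc : 0 < c) (hx : ∀ n, (B n).Nonempty → ‖x n‖ ≤ c) (N : ℕ) :
    ‖∑ n ∈ Finset.range N, μ (B n) (x n)‖ ≤ c * (semivar μ S).toReal := by
  obtain ⟨x', hx', hxx'⟩ := hμ.exists_norm_le_apply_eq hc.le hx
  have hunit : ∀ n, ‖c⁻¹ • x' n‖ ≤ 1 := fun n => by
    rw [norm_smul, Real.norm_of_nonneg (inv_nonneg.2 hc.le)]
    exact inv_mul_le_one_of_le₀ (hx' n) hc.le
  have h := ofReal_norm_sum_range_le_semivar (μ := μ) N hB hBS hd hunit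
  rw [ENNReal.ofReal_le_iff_le_toReal (hμ.semivar_ne_top S)] at h
  have hsmul : ∑ n ∈ Finset.range N, μ (B n) (x n) =
      c • ∑ n ∈ Finset.range N, μ (B n) (c⁻¹ • x' n) := by
    simp_rw [map_smul, ← Finset.smul_sum, smul_inv_smul₀ hc.ne', hxx']
  rw [hsmul, norm_smul, Real.norm_of_nonneg hc.le]
  exact mul_le_mul_of_nonneg_left h hc.le

theorem tendsto_semivar_of_antitone (hμ : IsIMeasure μ) {D : ℕ → Set Z}
    (hD : ∀ n, MeasurableSet (D n)) (hanti : Antitone D) (hempty : ⋂ n, D n = ∅) :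
    Tendsto (fun n => semivar μ (D n)) atTop (𝓝 0) := by
  refine ENNReal.tendsto_atTop_zero.mpr fun r hr => ?_
  suffices ∃ N, semivar μ (D N) ≤ r from
    this.imp fun N hN n hn => (semivar_mono (hanti hn)).trans hN
  by_contra! hbig
  refine hμ.not_of_forall_exists_lt_semivar hr (p := fun A => ∃ N, D N ⊆ A) ?_ Set.univ
    ⟨0, Set.subset_univ _⟩
  rintro A ⟨N, hNA⟩
  have hU : (⋃ M, D N \ D M) = D N := by
    rw [← Set.sdiff_iInter, hempty, Set.sdiff_empty]
  have hlt := hbig N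
  rw [← hU, hμ.semivar_iUnion_of_monotone (fun M => (hD N).diff (hD M))
    fun M M' h => Set.sdiff_subset_sdiff_right (hanti h)] at hlt
  obtain ⟨M, hM⟩ := lt_iSup_iff.mp hlt
  exact ⟨D N \ D M, Set.sdiff_subset.trans hNA, hM, max N M, fun z hz =>
    ⟨hNA (hanti (le_max_left N M) hz), fun h => h.2 (hanti (le_max_right N M) hz)⟩⟩

theorem tendsto_semivar_setOf_lt_norm_sub (hμ : IsIMeasure μ) {f : ℕ → Z → E} {g : Z → E}
    (hf : ∀ n, StronglyMeasurable (f n)) (hg : StronglyMeasurable g)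
    (hfg : ∀ z, Tendsto (fun n => f n z) atTop (𝓝 (g z))) {δ : ℝ} (hδ : 0 < δ) :
    Tendsto (fun N => semivar μ {z | ∃ n ≥ N, δ < ‖f n z - g z‖}) atTop (𝓝 0) := by
  refine hμ.tendsto_semivar_of_antitone (measurableSet_setOf_exists_lt_norm_sub hf hg δ)
    (fun N M h z ⟨n, hn, hz⟩ => ⟨n, h.trans hn, hz⟩) ?_
  refine Set.eq_empty_of_forall_notMem fun z hz => ?_
  obtain ⟨N, hN⟩ := Metric.tendsto_atTop.mp (hfg z) δ hδ
  obtain ⟨n, hn, hlt⟩ := Set.mem_iInter.mp hz N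
  exact (hN n hn).not_gt (by rwa [dist_eq_norm])

end IsIMeasure

section Integral

variable {Z E F : Type*} [MeasurableSpace Z] [NormedAddCommGroup E] [NormedSpace ℝ E]
  [NormedAddCommGroup F] [NormedSpace ℝ F] [CompleteSpace F] {μ : Set Z → E →L[ℝ] F}

theorem HasCVIntegral.hasSum (hμ : IsIMeasure μ) {h : Z → E} {y : F}
    (hy : HasCVIntegral μ h y) {C : ℝ} (hC : ∀ z, ‖h z‖ ≤ C) {P : ℕ → Set Z}
    (hP : ∀ m, MeasurableSet (P m)) (hPd : Pairwise (Disjoint on P)) (hPU : ⋃ m, P m = Set.univ)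
    {u : ℕ → E} (hu : ∀ m, ∀ z ∈ P m, h z = u m) :
    HasSum (fun m => μ (P m) (u m)) y := by
  obtain ⟨e, A, hA, hAd, hAU, he, hlim⟩ := hy
  set Q : ℕ × ℕ → F := fun q => μ (A q.1 ∩ P q.2) (e q.1)
  have hQ : Summable Q :=
    hμ.summable (A := fun q : ℕ × ℕ => A q.1 ∩ P q.2) (x := fun q => e q.1)
      (fun q => (hA q.1).inter (hP q.2)) (pairwise_disjoint_on_inter_prod hAd hPd) (C := C)
      fun q ⟨z, hzA, _⟩ => by rw [← he q.1 z hzA]; exact hC z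
  have hrow : ∀ n, HasSum (fun m => Q (n, m)) (μ (A n) (e n)) := fun n => by
    have := hμ.hasSum_apply (fun m => (hA n).inter (hP m))
      (fun i j hij => (hPd hij).mono Set.inter_subset_right Set.inter_subset_right) (e n)
    rwa [← Set.inter_iUnion, hPU, Set.inter_univ] at this
  have hcol : ∀ m, HasSum (fun n => Q (n, m)) (μ (P m) (u m)) := fun m => by
    have := hμ.hasSum_apply (fun n => (hA n).inter (hP m))
      (fun i j hij => (hAd hij).mono Set.inter_subset_left Set.inter_subset_left) (u m)
    rw [← Set.iUnion_inter, hAU, Set.univ_inter] at this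
    refine this.congr_fun fun n => hμ.apply_congr_of_nonempty fun ⟨z, hzA, hzP⟩ => ?_
    rw [← he n z hzA, hu m z hzP]
  have hQy : ∑' q, Q q = y :=
    tendsto_nhds_unique (hQ.hasSum.prod_fiberwise hrow).tendsto_sum_nat hlim
  have hswap : HasSum (fun q : ℕ × ℕ => Q q.swap) (∑' q, Q q) :=
    (Equiv.prodComm ℕ ℕ).hasSum_iff.mpr hQ.hasSum
  exact hQy ▸ hswap.prod_fiberwise hcol

theorem HasCVIntegral.sub (hμ : IsIMeasure μ) {h₁ h₂ : Z → E} {y₁ y₂ : F}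
    (hy₁ : HasCVIntegral μ h₁ y₁) (hy₂ : HasCVIntegral μ h₂ y₂) {C : ℝ}
    (hC₁ : ∀ z, ‖h₁ z‖ ≤ C) (hC₂ : ∀ z, ‖h₂ z‖ ≤ C) :
    HasCVIntegral μ (h₁ - h₂) (y₁ - y₂) := by
  obtain ⟨e₁, A, hA, hAd, hAU, he₁, -⟩ := id hy₁
  obtain ⟨e₂, B, hB, hBd, hBU, he₂, -⟩ := id hy₂
  set σ : ℕ ≃ ℕ × ℕ := Nat.pairEquiv.symm
  set P : ℕ → Set Z := fun k => A (σ k).1 ∩ B (σ k).2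
  have hP : ∀ k, MeasurableSet (P k) := fun k => (hA _).inter (hB _)
  have hPd : Pairwise (Disjoint on P) := fun i j hij =>
    pairwise_disjoint_on_inter_prod hAd hBd (σ.injective.ne hij)
  have hPU : ⋃ k, P k = Set.univ := Set.eq_univ_of_forall fun z => by
    obtain ⟨i, hi⟩ := Set.mem_iUnion.mp (hAU ▸ Set.mem_univ z)
    obtain ⟨j, hj⟩ := Set.mem_iUnion.mp (hBU ▸ Set.mem_univ z)
    exact Set.mem_iUnion.mpr ⟨σ.symm (i, j), by simp [P, hi, hj]⟩
  refine ⟨fun k => e₁ (σ k).1 - e₂ (σ k).2, P, hP, hPd, hPU, fun k z hz => ?_, ?_⟩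
  · rw [Pi.sub_apply, he₁ _ z hz.1, he₂ _ z hz.2]
  have h₁ := hy₁.hasSum hμ hC₁ hP hPd hPU (u := fun k => e₁ (σ k).1) fun k z hz => he₁ _ z hz.1
  have h₂ := hy₂.hasSum hμ hC₂ hP hPd hPU (u := fun k => e₂ (σ k).2) fun k z hz => he₂ _ z hz.2
  simpa only [map_sub] using (h₁.sub h₂).tendsto_sum_nat

theorem HasCVIntegral.norm_le (hμ : IsIMeasure μ) {h : Z → E} {y : F}
    (hy : HasCVIntegral μ h y) {S : Set Z} (hS : MeasurableSet S) {c δ : ℝ} (hc : 0 < c)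
    (hδ : 0 < δ) (hhS : ∀ z ∈ S, ‖h z‖ ≤ c) (hhSc : ∀ z ∉ S, ‖h z‖ ≤ δ) :
    ‖y‖ ≤ c * (semivar μ S).toReal + δ * (semivar μ Set.univ).toReal := by
  obtain ⟨e, A, hA, hAd, -, he, hlim⟩ := hy
  refine le_of_tendsto' hlim.norm fun N => ?_
  rw [← hμ.sum_apply_inter_add_sum_apply_diff hA hS]
  refine (norm_add_le _ _).trans (add_le_add ?_ ?_)
  · exact hμ.norm_sum_le_mul_semivar (fun n => (hA n).inter hS) (fun n => Set.inter_subset_right)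
      (fun i j hij => (hAd hij).mono Set.inter_subset_left Set.inter_subset_left) hc
      (fun n ⟨z, hzA, hzS⟩ => he n z hzA ▸ hhS z hzS) N
  · exact hμ.norm_sum_le_mul_semivar (fun n => (hA n).diff hS) (fun n => Set.subset_univ _)
      (fun i j hij => (hAd hij).mono Set.sdiff_subset Set.sdiff_subset) hδ
      (fun n ⟨z, hzA, hzS⟩ => he n z hzA ▸ hhSc z hzS) N

theorem HasIntegral.norm_sub_le (hμ : IsIMeasure μ) {h₁ h₂ : Z → E} {y₁ y₂ : F}
    (hy₁ : HasIntegral μ h₁ y₁) (hy₂ : HasIntegral μ h₂ y₂) {C : ℝ}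
    (hC₁ : ∀ z, ‖h₁ z‖ ≤ C) (hC₂ : ∀ z, ‖h₂ z‖ ≤ C) {S : Set Z} (hS : MeasurableSet S)
    {c δ : ℝ} (hc : 0 ≤ c) (hδ : 0 ≤ δ) (hhS : ∀ z ∈ S, ‖h₁ z - h₂ z‖ ≤ c)
    (hhSc : ∀ z ∉ S, ‖h₁ z - h₂ z‖ ≤ δ) :
    ‖y₁ - y₂‖ ≤ c * (semivar μ S).toReal + δ * (semivar μ Set.univ).toReal := by
  obtain ⟨g₁, w₁, hg₁, happ₁, hw₁⟩ := hy₁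
  obtain ⟨g₂, w₂, hg₂, happ₂, hw₂⟩ := hy₂
  have hk : ∀ k : ℕ, 1 / ((k : ℝ) + 1) ≤ 1 := fun k =>
    (div_le_one (by positivity)).mpr (by simp)
  have hbdd : ∀ {g : ℕ → Z → E} {h : Z → E}, (∀ k z, ‖g k z - h z‖ ≤ 1 / ((k : ℝ) + 1)) →
      (∀ z, ‖h z‖ ≤ C) → ∀ k z, ‖g k z‖ ≤ C + 1 := fun {g h} happ hC k z => by
    linarith [norm_le_norm_add_norm_sub' (g k z) (h z), happ k z, hC z, hk k]
  set η : ℕ → ℝ := fun k => 2 * (1 / ((k : ℝ) + 1))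
  have happ : ∀ k z, ‖(g₁ k - g₂ k) z‖ ≤ ‖h₁ z - h₂ z‖ + η k := fun k z => by
    have ha := norm_sub_le_norm_sub_add_norm_sub (g₁ k z) (h₁ z) (g₂ k z)
    have hb := norm_sub_le_norm_sub_add_norm_sub (h₁ z) (h₂ z) (g₂ k z)
    rw [norm_sub_rev (h₂ z)] at hb
    simp only [Pi.sub_apply, η]
    linarith [happ₁ k z, happ₂ k z]
  have hbound : ∀ k, ‖w₁ k - w₂ k‖ ≤
      (c + η k) * (semivar μ S).toReal + (δ + η k) * (semivar μ Set.univ).toReal := fun k =>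
    ((hg₁ k).sub hμ (hg₂ k) (hbdd happ₁ hC₁ k) (hbdd happ₂ hC₂ k)).norm_le hμ hS
      (by positivity) (by positivity) (fun z hz => (happ k z).trans (by linarith [hhS z hz]))
      fun z hz => (happ k z).trans (by linarith [hhSc z hz])
  have hη : Tendsto η atTop (𝓝 0) := by
    simpa only [mul_zero] using tendsto_one_div_add_atTop_nhds_zero_nat.const_mul (2 : ℝ)
  refine le_of_tendsto_of_tendsto' (hw₁.sub hw₂).norm ?_ hbound
  simpa using ((tendsto_const_nhds.add hη).mul_const _).add
    ((tendsto_const_nhds.add hη).mul_const (semivar μ Set.univ).toReal)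

end Integral

/-- Bounded Norm Convergence Theorem for i-measures: if uniformly bounded measurable
functions with separable ranges converge pointwise in norm, their integrals converge in
the norm of `F`. -/
theorem iMeasure_bounded_norm_convergence {Z E F : Type*} [MeasurableSpace Z]
    [NormedAddCommGroup E] [NormedSpace ℝ E] [MeasurableSpace E] [BorelSpace E]
    [NormedAddCommGroup F] [NormedSpace ℝ F] [CompleteSpace F]
    (μ : Set Z → E →L[ℝ] F) (hμ : IsIMeasure μ)
    (f : ℕ → Z → E) (g : Z → E)
    (hfm : ∀ n, Measurable (f n))
    (hfs : ∀ n, TopologicalSpace.IsSeparable (Set.range (f n)))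
    (hgm : Measurable g) (hgs : TopologicalSpace.IsSeparable (Set.range g))
    (hbd : ∃ C : ℝ, ∀ n z, ‖f n z‖ ≤ C)
    (hptw : ∀ z, Tendsto (fun n => f n z) atTop (𝓝 (g z)))
    (y : ℕ → F) (w : F)
    (hy : ∀ n, HasIntegral μ (f n) (y n)) (hw : HasIntegral μ g w) :
    Tendsto y atTop (𝓝 w) := by
  obtain ⟨C, hC⟩ := hbd
  have hgC : ∀ z, ‖g z‖ ≤ C := fun z => le_of_tendsto' (hptw z).norm fun n => hC n z
  have hf : ∀ n, StronglyMeasurable (f n) := fun n =>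
    stronglyMeasurable_iff_measurable_separable.mpr ⟨hfm n, hfs n⟩
  have hg : StronglyMeasurable g := stronglyMeasurable_iff_measurable_separable.mpr ⟨hgm, hgs⟩
  set c := 2 * max C 0
  set M := c + (semivar μ Set.univ).toReal with hM
  have key : ∀ δ > 0, ∀ᶠ n in atTop, ‖y n - w‖ ≤ δ * M := by
    intro δ hδ
    obtain ⟨N, hN⟩ := ENNReal.tendsto_atTop_zero.mp
      (hμ.tendsto_semivar_setOf_lt_norm_sub hf hg hptw hδ) _ (ENNReal.ofReal_pos.mpr hδ)
    filter_upwards [eventually_ge_atTop N] with n hn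
    refine ((hy n).norm_sub_le hμ hw (hC n) hgC (measurableSet_setOf_exists_lt_norm_sub hf hg δ N)
      (c := c) (by positivity) hδ.le
      (fun z _ => (norm_sub_le _ _).trans (by linarith [hC n z, hgC z, le_max_left C 0]))
      fun z hz => not_lt.mp fun h => hz ⟨n, hn, h⟩).trans ?_
    calc _ ≤ c * δ + δ * (semivar μ Set.univ).toReal := by
          gcongr
          exact ENNReal.toReal_le_of_le_ofReal hδ.le (hN N le_rfl)
      _ = δ * M := by rw [hM]; ring
  refine Metric.tendsto_atTop.mpr fun ε hε => ?_
  obtain ⟨N, hN⟩ := (key (ε / (M + 1)) (by positivity)).exists_forall_of_atTop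
  refine ⟨N, fun n hn => (dist_eq_norm (y n) w).trans_lt ((hN n hn).trans_lt ?_)⟩
  rw [div_mul_eq_mul_div, div_lt_iff₀ (by positivity)]
  linarith
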